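/- Let K be a positive rational number and let B consist of exactly two baskets (1, 2), (b, 5), such that P_2(K, B) = 1 and P_3(K, B) = 2. Then K = 3/10, b ∈ {2, 3}, P_4(K, B) = 4 and P_5(K, B) = 7. -/

import Mathlib

/-- A basket `(b, r)` with `0 < b < r` and `gcd(b, r) = 1`. -/
structure Basket where
  b : ℕ
  r : ℕ
  b_pos : 0 < b
  b_lt_r : b < r
  coprime : Nat.gcd b r = 1

/-- Reid's correction term `l_Q(m)` of a basket `Q` for `m ≥ 2`. -/
def Basket.corr (Q : Basket) (m : ℕ) : ℚ :=
  ∑ j ∈ Finset.Icc 1 (m - 1),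
    ((Q.b * j % Q.r : ℕ) : ℚ) * ((Q.r : ℚ) - ((Q.b * j % Q.r : ℕ) : ℚ)) / (2 * (Q.r : ℚ))

/-- The virtual `m`-th plurigenus `P_m(K, B)` for `m ≥ 2`. -/
def plurigenus (K : ℚ) (B : Multiset Basket) (m : ℕ) : ℚ :=
  (1 / 12 : ℚ) * m * (m - 1) * (2 * m - 1) * K + (B.map (fun Q => Q.corr m)).sum

/-- `b' = b` if `2b ≤ r`, and `b' = r - b` otherwise. -/
def Basket.b' (Q : Basket) : ℕ := if 2 * Q.b ≤ Q.r then Q.b else Q.r - Q.b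

/-- The basket `(1, 2)`. -/
def B12 : Basket := ⟨1, 2, by decide, by decide, by decide⟩

/-! In `P_3` the basket `(b, 5)` contributes `1` whatever `b` is, since `b` and `2b` are, modulo `5`,
one of `±1` and one of `±2`; so `P_3 = 2` fixes `K`. Then `P_2 = 1` forces `b (5 - b) = 6`. -/

namespace Basket

variable (Q : Basket)

lemma corr_one : Q.corr 1 = 0 := rfl

lemma corr_succ {m : ℕ} (hm : 1 ≤ m) :
    Q.corr (m + 1) = Q.corr m +
      ((Q.b * m % Q.r : ℕ) : ℚ) * ((Q.r : ℚ) - ((Q.b * m % Q.r : ℕ) : ℚ)) / (2 * (Q.r : ℚ)) := by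
  obtain ⟨n, rfl⟩ := Nat.exists_eq_add_of_le' hm
  rw [corr, corr, Nat.add_sub_cancel, Nat.add_sub_cancel, Finset.sum_Icc_succ_top (by omega)]

lemma corr_two : Q.corr 2 = (Q.b : ℚ) * (Q.r - Q.b) / (2 * Q.r) := by
  rw [corr_succ Q le_rfl, corr_one, mul_one, Nat.mod_eq_of_lt Q.b_lt_r, zero_add]

lemma corr_three_of_r_eq_five {Q : Basket} (hr : Q.r = 5) : Q.corr 3 = 1 := by
  have := Q.b_pos; have := hr ▸ Q.b_lt_r
  rw [corr_succ Q (by norm_num), corr_two, hr]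
  interval_cases Q.b <;> norm_num

lemma corr_two_eq_iff_of_r_eq_five {Q : Basket} (hr : Q.r = 5) :
    Q.corr 2 = 3 / 5 ↔ Q.b = 2 ∨ Q.b = 3 := by
  have := Q.b_pos; have := hr ▸ Q.b_lt_r
  rw [corr_two, hr]
  interval_cases Q.b <;> norm_num

lemma corr_four_of_r_eq_five {Q : Basket} (hr : Q.r = 5)
    (hb : Q.b = 2 ∨ Q.b = 3) : Q.corr 4 = 7 / 5 := by
  rw [corr_succ Q (by norm_num), corr_three_of_r_eq_five hr, hr]
  rcases hb with hb | hb <;> rw [hb] <;> norm_num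

lemma corr_five_of_r_eq_five {Q : Basket} (hr : Q.r = 5) : Q.corr 5 = 2 := by
  have := Q.b_pos; have := hr ▸ Q.b_lt_r
  rw [corr_succ Q (by norm_num), corr_succ Q (by norm_num), corr_three_of_r_eq_five hr, hr]
  interval_cases Q.b <;> norm_num

end Basket

lemma B12_corr {m : ℕ} (hm : 1 ≤ m) : B12.corr m = ((m / 2 : ℕ) : ℚ) / 4 := by
  induction m, hm using Nat.le_induction with
  | base => simp [Basket.corr_one]
  | succ m hm ih =>
    rw [Basket.corr_succ B12 hm, ih]
    simp only [B12, one_mul]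
    rcases Nat.even_or_odd m with ⟨k, rfl⟩ | ⟨k, rfl⟩
    · rw [show (k + k + 1) / 2 = k by omega, show (k + k) / 2 = k by omega,
        show (k + k) % 2 = 0 by omega]
      norm_num
    · rw [show (2 * k + 1 + 1) / 2 = k + 1 by omega, show (2 * k + 1) / 2 = k by omega,
        show (2 * k + 1) % 2 = 1 by omega]
      push_cast
      ring

lemma plurigenus_pair (K : ℚ) (Q₁ Q₂ : Basket) (m : ℕ) :
    plurigenus K {Q₁, Q₂} m =
      (1 / 12 : ℚ) * m * (m - 1) * (2 * m - 1) * K + (Q₁.corr m + Q₂.corr m) := by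
  simp [plurigenus]

theorem stmt15_general (K : ℚ) (Q : Basket) (hr : Q.r = 5)
    (h2 : plurigenus K {B12, Q} 2 = 1)
    (h3 : plurigenus K {B12, Q} 3 = 2) :
    K = 3 / 10 ∧ (Q.b = 2 ∨ Q.b = 3) ∧
      plurigenus K {B12, Q} 4 = 4 ∧ plurigenus K {B12, Q} 5 = 7 := by
  simp only [plurigenus_pair] at h2 h3 ⊢
  rw [B12_corr (by norm_num), Basket.corr_three_of_r_eq_five hr] at h3
  rw [B12_corr (by norm_num)] at h2
  have hK : K = 3 / 10 := by norm_num at h3; linarith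
  have hb : Q.b = 2 ∨ Q.b = 3 :=
    (Basket.corr_two_eq_iff_of_r_eq_five hr).1 (by subst hK; norm_num at h2; linarith)
  refine ⟨hK, hb, ?_, ?_⟩
  · rw [Basket.corr_four_of_r_eq_five hr hb, B12_corr (by norm_num), hK]; norm_num
  · rw [Basket.corr_five_of_r_eq_five hr, B12_corr (by norm_num), hK]; norm_num

theorem stmt15 (K : ℚ) (hK : 0 < K) (Q : Basket) (hr : Q.r = 5)
    (h2 : plurigenus K {B12, Q} 2 = 1)
    (h3 : plurigenus K {B12, Q} 3 = 2) :
    K = 3 / 10 ∧ (Q.b = 2 ∨ Q.b = 3) ∧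
      plurigenus K {B12, Q} 4 = 4 ∧ plurigenus K {B12, Q} 5 = 7 :=
  stmt15_general K Q hr h2 h3
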